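/- Two equal disks cannot cover a third equal disk with a different center: let r > 0 and let a, b, c be points of the Euclidean plane. If the closed disk of radius r centered at c is contained in the union of the closed disks of radius r centered at a and at b, then c = a or c = b. -/

import Mathlib

/-!
If `c` differs from both `a` and `b`, choose a direction `u` making a non-acute angle with both
`a - c` and `b - c`; this is possible in any dimension at least two. The point `c + r • u / ‖u‖`
lies in the ball around `c`, but expanding `‖(c - z) + r • u / ‖u‖‖²` shows that it is at
distance more than `r` from `z = a` and from `z = b`.
-/

open Metric Module RealInnerProductSpace

variable {E : Type*} [NormedAddCommGroup E] [InnerProductSpace ℝ E]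

theorem exists_ne_zero_inner_eq_zero [FiniteDimensional ℝ E] (hE : 2 ≤ finrank ℝ E) (v : E) :
    ∃ u ≠ 0, ⟪v, u⟫ = 0 := by
  have hker : LinearMap.ker (innerₛₗ ℝ v) ≠ ⊥ :=
    LinearMap.ker_ne_bot_of_finrank_lt (by rw [finrank_self]; omega)
  obtain ⟨u, hu, hu0⟩ := Submodule.exists_mem_ne_zero_of_ne_bot hker
  exact ⟨u, hu0, hu⟩

theorem inner_norm_smul_add_norm_smul_self_nonneg (v w : E) :
    0 ≤ ⟪‖w‖ • v + ‖v‖ • w, v⟫ := by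
  have hcs := neg_le_of_abs_le (abs_real_inner_le_norm w v)
  rw [inner_add_left, real_inner_smul_left, real_inner_smul_left, real_inner_self_eq_norm_sq]
  nlinarith [norm_nonneg v, norm_nonneg w]

theorem exists_ne_zero_inner_nonpos_and_inner_nonpos [FiniteDimensional ℝ E]
    (hE : 2 ≤ finrank ℝ E) (v w : E) : ∃ u ≠ 0, ⟪u, v⟫ ≤ 0 ∧ ⟪u, w⟫ ≤ 0 := by
  by_cases hs : ‖w‖ • v + ‖v‖ • w = 0
  · -- `v` and `w` point in opposite directions (or one vanishes): a normal to `v` works.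
    obtain ⟨u, hu0, huv⟩ := exists_ne_zero_inner_eq_zero hE v
    rw [real_inner_comm] at huv
    rcases le_total ⟪u, w⟫ 0 with huw | huw
    · exact ⟨u, hu0, huv.le, huw⟩
    · exact ⟨-u, neg_ne_zero.mpr hu0, by simp [huv], by simpa [inner_neg_left] using huw⟩
  · refine ⟨-(‖w‖ • v + ‖v‖ • w), neg_ne_zero.mpr hs, ?_, ?_⟩
    · rw [inner_neg_left, neg_nonpos]
      exact inner_norm_smul_add_norm_smul_self_nonneg v w
    · rw [inner_neg_left, neg_nonpos, add_comm]
      exact inner_norm_smul_add_norm_smul_self_nonneg w v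

theorem norm_lt_norm_add_of_inner_nonneg {x y : E} (hx : x ≠ 0) (hxy : 0 ≤ ⟪x, y⟫) :
    ‖y‖ < ‖x + y‖ := by
  have hx' : 0 < ‖x‖ := norm_pos_iff.mpr hx
  refine lt_of_pow_lt_pow_left₀ 2 (norm_nonneg _) ?_
  rw [norm_add_sq_real]
  nlinarith

theorem add_notMem_closedBall_of_inner_nonpos {c z y : E} (hzc : z ≠ c)
    (hy : ⟪y, z - c⟫ ≤ 0) : c + y ∉ closedBall z ‖y‖ := by
  have hinner : 0 ≤ ⟪c - z, y⟫ := by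
    rw [real_inner_comm, ← neg_sub z c, inner_neg_right]
    exact neg_nonneg.mpr hy
  rw [mem_closedBall, dist_eq_norm, not_le, add_sub_right_comm]
  exact norm_lt_norm_add_of_inner_nonneg (sub_ne_zero.mpr hzc.symm) hinner

theorem eq_or_eq_of_closedBall_subset_union [FiniteDimensional ℝ E] (hE : 2 ≤ finrank ℝ E)
    {a b c : E} {r : ℝ} (hr : 0 ≤ r)
    (h : closedBall c r ⊆ closedBall a r ∪ closedBall b r) : c = a ∨ c = b := by
  by_contra! hne
  obtain ⟨u, hu0, hua, hub⟩ := exists_ne_zero_inner_nonpos_and_inner_nonpos hE (a - c) (b - c)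
  set y := (r / ‖u‖) • u
  have hy : ‖y‖ = r := by
    rw [norm_smul, Real.norm_of_nonneg (by positivity),
      div_mul_cancel₀ _ (norm_ne_zero_iff.mpr hu0)]
  have hyz {z : E} (huz : ⟪u, z - c⟫ ≤ 0) : ⟪y, z - c⟫ ≤ 0 := by
    rw [real_inner_smul_left]
    exact mul_nonpos_of_nonneg_of_nonpos (by positivity) huz
  have hmem : c + y ∈ closedBall c r := by simp [mem_closedBall, dist_eq_norm, hy]
  rcases h hmem with ha | hb
  · exact add_notMem_closedBall_of_inner_nonpos (Ne.symm hne.1) (hyz hua) (hy ▸ ha)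
  · exact add_notMem_closedBall_of_inner_nonpos (Ne.symm hne.2) (hyz hub) (hy ▸ hb)

/-- Two equal disks cannot cover a third equal disk with a different center:
if the closed disk of radius `r > 0` around `c` is contained in the union of
the closed disks of radius `r` around `a` and `b`, then `c = a` or `c = b`. -/
theorem closedBall_subset_union_closedBall
    (r : ℝ) (hr : 0 < r)
    (a b c : EuclideanSpace ℝ (Fin 2))
    (h : Metric.closedBall c r ⊆ Metric.closedBall a r ∪ Metric.closedBall b r) :
    c = a ∨ c = b :=
  eq_or_eq_of_closedBall_subset_union finrank_euclideanSpace_fin.ge hr.le h
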